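/- Let b: ℝ^{d+1} → ℝ^d be a Borel function with |b(t,x)| ≤ c/|x| for some constant c > 0 (and b = 0 at x = 0), and let d/2 < d₀ < d. Then with p₁ = d₀ and q₁ = ∞, the quantity sup_{r ≤ ρ} r · sup_{C ∈ 𝔹_r} ⨍‖b‖_{L_{p₁,q₁}(C)} is bounded by N(d) c uniformly in ρ > 0; in particular it can be made less than any given ε > 0 by choosing c small. -/

import Mathlib

set_option autoImplicit false

open MeasureTheory Metric Set ENNReal
noncomputable section

/-- The normalized mixed `L_{p,∞}` norm of `b` over the parabolic cylinder
`C_r(t₀,x₀) = [t₀,t₀+r²) × B_r(x₀)`: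
`ess sup_{s ∈ [t₀,t₀+r²)} (⨍_{B_r(x₀)} |b(s,y)|^p dy)^{1/p}`. -/
def avgMixedNormInf (d : ℕ) (p r t₀ : ℝ) (x₀ : EuclideanSpace ℝ (Fin d))
    (b : ℝ → EuclideanSpace ℝ (Fin d) → EuclideanSpace ℝ (Fin d)) : ℝ≥0∞ :=
  essSup
    (fun s : ℝ =>
      ((volume (ball x₀ r))⁻¹ *
        ∫⁻ y in ball x₀ r, ENNReal.ofReal ‖b s y‖ ^ p) ^ (1 / p))
    (volume.restrict (Ico t₀ (t₀ + r ^ 2)))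


namespace Stmt13Aux
variable {d : ℕ}

lemma nontriv (hd : 1 ≤ d) : Nontrivial (EuclideanSpace ℝ (Fin d)) := by
  have : Nontrivial (Fin d → ℝ) := by haveI : NeZero d := ⟨by omega⟩; infer_instance
  exact (WithLp.equiv 2 (Fin d → ℝ)).nontrivial

lemma vol_ball (hd : 1 ≤ d) (x : EuclideanSpace ℝ (Fin d)) {r : ℝ} (hr : 0 ≤ r) :
    volume (ball x r) = ENNReal.ofReal (r ^ (d:ℝ)) * volume (ball (0:EuclideanSpace ℝ (Fin d)) 1) := by
  haveI := nontriv hd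
  rw [Measure.addHaar_ball volume x hr, finrank_euclideanSpace_fin, Real.rpow_natCast]

/-- The geometric constant. -/
def Kc (d : ℕ) (d₀ : ℝ) : ℝ := 2 ^ d₀ * (1 - 2 ^ (-((d:ℝ) - d₀)))⁻¹

lemma oneSub_pos {d₀ : ℝ} (h2 : d₀ < d) : 0 < 1 - (2:ℝ) ^ (-((d:ℝ) - d₀)) := by
  have : (2:ℝ) ^ (-((d:ℝ) - d₀)) < 1 :=
    Real.rpow_lt_one_of_one_lt_of_neg one_lt_two (by linarith)
  linarith

lemma Kc_pos {d₀ : ℝ} (h2 : d₀ < d) : 0 < Kc d d₀ := by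
  have h := oneSub_pos (d := d) h2
  have : (0:ℝ) < (2:ℝ) ^ d₀ := by positivity
  unfold Kc; positivity

lemma geom_const {d₀ : ℝ} (h2 : d₀ < d) :
    (1 - ENNReal.ofReal ((2:ℝ) ^ (-((d:ℝ) - d₀))))⁻¹ =
      ENNReal.ofReal ((1 - (2:ℝ) ^ (-((d:ℝ) - d₀)))⁻¹) := by
  have h := oneSub_pos (d := d) h2
  rw [ENNReal.ofReal_inv_of_pos h, ENNReal.ofReal_sub _ (by positivity), ENNReal.ofReal_one]

lemma real_id (d₀ δ R : ℝ) (hR : 0 < R) (d : ℕ) (hdd : (d:ℝ) = d₀ + δ) (n : ℕ) :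
    ((R / 2 ^ (n+1)) ^ d₀)⁻¹ * (R / 2 ^ n) ^ (d:ℝ) =
      2 ^ d₀ * R ^ δ * ((2:ℝ) ^ (-δ)) ^ n := by
  have h2 : (0:ℝ) < 2 := two_pos
  have h2n : (0:ℝ) < 2 ^ n := by positivity
  have h2n1 : (0:ℝ) < 2 ^ (n+1) := by positivity
  rw [Real.div_rpow hR.le h2n1.le, Real.div_rpow hR.le h2n.le]
  rw [show ((2:ℝ) ^ (n+1)) = (2:ℝ) ^ (((n:ℝ)+1)) by
        rw [← Real.rpow_natCast 2 (n+1)]; push_cast; ring_nf,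
      show ((2:ℝ) ^ n) = (2:ℝ) ^ ((n:ℝ)) by rw [← Real.rpow_natCast 2 n],
      ← Real.rpow_natCast ((2:ℝ) ^ (-δ)) n,
      ← Real.rpow_mul h2.le, ← Real.rpow_mul h2.le, ← Real.rpow_mul h2.le, hdd,
      Real.rpow_add hR]
  rw [inv_div]
  field_simp
  have key : (2:ℝ) ^ ((↑n + 1) * d₀) = 2 ^ d₀ * 2 ^ (-(δ * (n:ℝ))) * 2 ^ ((n:ℝ) * (d₀ + δ)) := by
    rw [← Real.rpow_add h2, ← Real.rpow_add h2]; congr 1; ring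
  rw [key]; ring

lemma ballInt (hd : 1 ≤ d) {d₀ : ℝ} (h1 : 0 < d₀) (h2 : d₀ < d) {R : ℝ} (hR : 0 < R) :
    ∫⁻ y in ball (0:EuclideanSpace ℝ (Fin d)) R, (ENNReal.ofReal ‖y‖ ^ d₀)⁻¹ ≤
      ENNReal.ofReal (2 ^ d₀ * R ^ ((d:ℝ) - d₀)) * (1 - ENNReal.ofReal (2 ^ (-((d:ℝ) - d₀))))⁻¹ *
        volume (ball (0:EuclideanSpace ℝ (Fin d)) 1) := by
  haveI : Nontrivial (EuclideanSpace ℝ (Fin d)) := by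
    have : Nontrivial (Fin d → ℝ) := by haveI : NeZero d := ⟨by omega⟩; infer_instance
    exact (WithLp.equiv 2 (Fin d → ℝ)).nontrivial
  set E := EuclideanSpace ℝ (Fin d)
  set δ : ℝ := (d:ℝ) - d₀ with hδdef
  have hδ : 0 < δ := by simp [hδdef]; linarith
  set f : E → ℝ≥0∞ := fun y => (ENNReal.ofReal ‖y‖ ^ d₀)⁻¹ with hf
  set A : ℕ → Set E := fun n => ball (0:EuclideanSpace ℝ (Fin d)) (R / 2 ^ n) \ ball (0:EuclideanSpace ℝ (Fin d)) (R / 2 ^ (n+1)) with hA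
  -- drop the origin
  have h0 : (volume : Measure E) {0} = 0 := measure_singleton 0
  have hcong : ∫⁻ y in ball (0:EuclideanSpace ℝ (Fin d)) R, f y = ∫⁻ y in ball (0:EuclideanSpace ℝ (Fin d)) R \ {0}, f y := by
    refine (setLIntegral_congr ?_).symm
    exact MeasureTheory.diff_null_ae_eq_self h0
  have hcov : ball (0:EuclideanSpace ℝ (Fin d)) R \ {0} ⊆ ⋃ n, A n := by
    rintro y ⟨hy, hy0⟩
    have hyn : 0 < ‖y‖ := by simpa [norm_pos_iff] using Set.mem_singleton_iff.not.mp hy0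
    have hex : ∃ n : ℕ, R / 2 ^ (n+1) ≤ ‖y‖ := by
      obtain ⟨n, hn⟩ := pow_unbounded_of_one_lt (R / ‖y‖) (one_lt_two (α := ℝ))
      refine ⟨n, ?_⟩
      rw [div_lt_iff₀ hyn] at hn
      rw [div_le_iff₀ (by positivity)]
      have : (2:ℝ) ^ n ≤ 2 ^ (n+1) := by
        apply pow_le_pow_right₀ one_le_two; omega
      nlinarith
    classical
    have hn1 := Nat.find_spec hex
    set n := Nat.find hex with hndef
    refine Set.mem_iUnion.2 ⟨n, ⟨?_, ?_⟩⟩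
    · -- ‖y‖ < R / 2 ^ n
      simp only [hA, mem_ball, dist_zero_right]
      rcases Nat.eq_zero_or_pos n with h | h
      · simpa [h, mem_ball, dist_zero_right] using hy
      · have := Nat.find_min hex (m := n - 1) (by omega)
        push_neg at this
        rw [show n - 1 + 1 = n by omega] at this
        exact this
    · simp only [hA, mem_ball, dist_zero_right, not_lt]
      exact hn1
  have hAm : ∀ n, MeasurableSet (A n) := fun n => measurableSet_ball.diff measurableSet_ball
  have hint : ∀ n : ℕ, ∫⁻ y in A n, f y ≤
      ENNReal.ofReal (2 ^ d₀ * R ^ δ * ((2:ℝ) ^ (-δ)) ^ n) * volume (ball (0:EuclideanSpace ℝ (Fin d)) 1) := by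
    intro n
    have hRn : (0:ℝ) < R / 2 ^ (n+1) := by positivity
    have hb : ∀ y ∈ A n, f y ≤ ENNReal.ofReal (((R / 2 ^ (n+1)) ^ d₀)⁻¹) := by
      intro y hy
      have hy2 : R / 2 ^ (n+1) ≤ ‖y‖ := by
        have := hy.2
        simp only [hA, mem_ball, dist_zero_right, not_lt] at this
        exact this
      simp only [hf]
      rw [ENNReal.ofReal_inv_of_pos (by positivity),
        ← ENNReal.ofReal_rpow_of_pos hRn]
      gcongr
    calc ∫⁻ y in A n, f y
        ≤ ∫⁻ _ in A n, ENNReal.ofReal (((R / 2 ^ (n+1)) ^ d₀)⁻¹) :=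
          setLIntegral_mono' (hAm n) hb
      _ = ENNReal.ofReal (((R / 2 ^ (n+1)) ^ d₀)⁻¹) * volume (A n) := setLIntegral_const _ _
      _ ≤ ENNReal.ofReal (((R / 2 ^ (n+1)) ^ d₀)⁻¹) * volume (ball (0:EuclideanSpace ℝ (Fin d)) (R / 2 ^ n)) := by
          gcongr
          exact Set.diff_subset
      _ = ENNReal.ofReal (((R / 2 ^ (n+1)) ^ d₀)⁻¹ * (R / 2 ^ n) ^ (d:ℝ)) *
            volume (ball (0:EuclideanSpace ℝ (Fin d)) 1) := by
          rw [vol_ball hd _ (by positivity),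
            ENNReal.ofReal_mul (by positivity), mul_assoc]
      _ = ENNReal.ofReal (2 ^ d₀ * R ^ δ * ((2:ℝ) ^ (-δ)) ^ n) * volume (ball (0:EuclideanSpace ℝ (Fin d)) 1) := by
          rw [real_id d₀ δ R hR d (by rw [hδdef]; ring) n]
  have hq : (0:ℝ) ≤ 2 ^ (-δ) := by positivity
  calc ∫⁻ y in ball (0:EuclideanSpace ℝ (Fin d)) R, f y
      ≤ ∑' n : ℕ, ∫⁻ y in A n, f y := by
        rw [hcong]
        exact le_trans (lintegral_mono_set hcov) (lintegral_iUnion_le _ _)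
    _ ≤ ∑' n : ℕ, ENNReal.ofReal (2 ^ d₀ * R ^ δ * ((2:ℝ) ^ (-δ)) ^ n) *
          volume (ball (0:EuclideanSpace ℝ (Fin d)) 1) := ENNReal.tsum_le_tsum hint
    _ = ∑' n : ℕ, ENNReal.ofReal (2 ^ d₀ * R ^ δ) *
          ((ENNReal.ofReal ((2:ℝ) ^ (-δ))) ^ n * volume (ball (0:EuclideanSpace ℝ (Fin d)) 1)) := by
        congr 1; funext n
        rw [ENNReal.ofReal_mul (by positivity), ENNReal.ofReal_pow hq, mul_assoc]
    _ = ENNReal.ofReal (2 ^ d₀ * R ^ δ) *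
          ((∑' n : ℕ, (ENNReal.ofReal ((2:ℝ) ^ (-δ))) ^ n) * volume (ball (0:EuclideanSpace ℝ (Fin d)) 1)) := by
        rw [ENNReal.tsum_mul_left, ENNReal.tsum_mul_right]
    _ = ENNReal.ofReal (2 ^ d₀ * R ^ δ) * (1 - ENNReal.ofReal (2 ^ (-δ)))⁻¹ *
          volume (ball (0:EuclideanSpace ℝ (Fin d)) 1) := by
        rw [ENNReal.tsum_geometric, mul_assoc]


lemma ballInt' (hd : 1 ≤ d) {d₀ : ℝ} (h1 : 0 < d₀) (h2 : d₀ < d) {R : ℝ} (hR : 0 < R) :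
    ∫⁻ y in ball (0:EuclideanSpace ℝ (Fin d)) R, (ENNReal.ofReal ‖y‖ ^ d₀)⁻¹ ≤
      ENNReal.ofReal (Kc d d₀ * R ^ ((d:ℝ) - d₀)) *
        volume (ball (0:EuclideanSpace ℝ (Fin d)) 1) := by
  refine (ballInt hd h1 h2 hR).trans (le_of_eq ?_)
  rw [geom_const h2, ← ENNReal.ofReal_mul (by positivity)]
  congr 2
  unfold Kc
  ring

/-- The final constant. -/
def Nc (d : ℕ) (d₀ : ℝ) : ℝ := (Kc d d₀ + 1) ^ (1/d₀)

lemma Nc_pos {d₀ : ℝ} (h2 : d₀ < d) : 0 < Nc d d₀ := by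
  have := Kc_pos (d := d) h2
  unfold Nc; positivity

lemma avg_bound (hd : 1 ≤ d) {d₀ : ℝ} (h1 : 0 < d₀) (h2 : d₀ < d)
    (b : ℝ → EuclideanSpace ℝ (Fin d) → EuclideanSpace ℝ (Fin d)) (c : ℝ) (hc : 0 < c)
    (hb : ∀ t x, x ≠ 0 → ‖b t x‖ ≤ c / ‖x‖)
    {r : ℝ} (hr : 0 < r) (s : ℝ) (x₀ : EuclideanSpace ℝ (Fin d)) :
    ((volume (ball x₀ r))⁻¹ * ∫⁻ y in ball x₀ r, ENNReal.ofReal ‖b s y‖ ^ d₀) ^ (1/d₀)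
      ≤ ENNReal.ofReal (Nc d d₀ * c) * (ENNReal.ofReal r)⁻¹ := by
  haveI := nontriv hd
  set δ : ℝ := (d:ℝ) - d₀ with hδdef
  have hδ : 0 < δ := by rw [hδdef]; linarith
  have hK : 0 < Kc d d₀ := Kc_pos h2
  set v₁ := volume (ball (0:EuclideanSpace ℝ (Fin d)) 1) with hv
  have hv0 : v₁ ≠ 0 := (measure_ball_pos volume _ one_pos).ne'
  have hvt : v₁ ≠ ⊤ := measure_ball_lt_top.ne
  set C : ℝ≥0∞ := (ENNReal.ofReal c) ^ d₀ with hC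
  have hCt : C ≠ ⊤ := ENNReal.rpow_ne_top_of_nonneg h1.le ENNReal.ofReal_ne_top
  have hfg : ∀ y : EuclideanSpace ℝ (Fin d), y ≠ 0 →
      ENNReal.ofReal ‖b s y‖ ^ d₀ ≤ C * (ENNReal.ofReal ‖y‖ ^ d₀)⁻¹ := by
    intro y hy
    have hyn : 0 < ‖y‖ := norm_pos_iff.2 hy
    have hle : ENNReal.ofReal ‖b s y‖ ≤ ENNReal.ofReal c / ENNReal.ofReal ‖y‖ := by
      rw [← ENNReal.ofReal_div_of_pos hyn]
      exact ENNReal.ofReal_le_ofReal (hb s y hy)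
    calc ENNReal.ofReal ‖b s y‖ ^ d₀
        ≤ (ENNReal.ofReal c / ENNReal.ofReal ‖y‖) ^ d₀ := ENNReal.rpow_le_rpow hle h1.le
      _ = C * (ENNReal.ofReal ‖y‖ ^ d₀)⁻¹ := by
          rw [ENNReal.div_rpow_of_nonneg _ _ h1.le, div_eq_mul_inv]
  have hae : ∀ᵐ y : EuclideanSpace ℝ (Fin d) ∂volume,
      ENNReal.ofReal ‖b s y‖ ^ d₀ ≤ C * (ENNReal.ofReal ‖y‖ ^ d₀)⁻¹ := by
    refine ae_iff.2 (measure_mono_null ?_ (measure_singleton (0:EuclideanSpace ℝ (Fin d))))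
    intro y hy
    simp only [mem_setOf_eq, not_le] at hy
    simp only [mem_singleton_iff]
    by_contra hne
    exact absurd (hfg y hne) (not_le.2 hy)
  have hterm1 : ∫⁻ y in ball x₀ r ∩ ball (0:EuclideanSpace ℝ (Fin d)) r, ENNReal.ofReal ‖b s y‖ ^ d₀ ≤
      C * (ENNReal.ofReal (Kc d d₀ * r ^ δ) * v₁) := by
    calc ∫⁻ y in ball x₀ r ∩ ball (0:EuclideanSpace ℝ (Fin d)) r, ENNReal.ofReal ‖b s y‖ ^ d₀
        ≤ ∫⁻ y in ball (0:EuclideanSpace ℝ (Fin d)) r, ENNReal.ofReal ‖b s y‖ ^ d₀ :=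
          lintegral_mono_set inter_subset_right
      _ ≤ ∫⁻ y in ball (0:EuclideanSpace ℝ (Fin d)) r, C * (ENNReal.ofReal ‖y‖ ^ d₀)⁻¹ :=
          lintegral_mono_ae (ae_restrict_of_ae hae)
      _ = C * ∫⁻ y in ball (0:EuclideanSpace ℝ (Fin d)) r, (ENNReal.ofReal ‖y‖ ^ d₀)⁻¹ :=
          lintegral_const_mul' _ _ hCt
      _ ≤ C * (ENNReal.ofReal (Kc d d₀ * r ^ δ) * v₁) := by
          gcongr
          exact ballInt' hd h1 h2 hr
  have hterm2 : ∫⁻ y in ball x₀ r \ ball (0:EuclideanSpace ℝ (Fin d)) r, ENNReal.ofReal ‖b s y‖ ^ d₀ ≤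
      C * (ENNReal.ofReal (r ^ δ) * v₁) := by
    have hbd : ∀ y ∈ ball x₀ r \ ball (0:EuclideanSpace ℝ (Fin d)) r,
        ENNReal.ofReal ‖b s y‖ ^ d₀ ≤ C * (ENNReal.ofReal r ^ d₀)⁻¹ := by
      intro y hy
      have hry : r ≤ ‖y‖ := by
        have := hy.2
        simp only [mem_ball, dist_zero_right, not_lt] at this
        exact this
      have hy0 : y ≠ 0 := by
        intro h
        rw [h, norm_zero] at hry
        linarith
      refine (hfg y hy0).trans ?_
      gcongr
    calc ∫⁻ y in ball x₀ r \ ball (0:EuclideanSpace ℝ (Fin d)) r, ENNReal.ofReal ‖b s y‖ ^ d₀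
        ≤ ∫⁻ _ in ball x₀ r \ ball (0:EuclideanSpace ℝ (Fin d)) r, C * (ENNReal.ofReal r ^ d₀)⁻¹ :=
          setLIntegral_mono' (measurableSet_ball.diff measurableSet_ball) hbd
      _ = C * (ENNReal.ofReal r ^ d₀)⁻¹ * volume (ball x₀ r \ ball (0:EuclideanSpace ℝ (Fin d)) r) :=
          setLIntegral_const _ _
      _ ≤ C * (ENNReal.ofReal r ^ d₀)⁻¹ * volume (ball x₀ r) := by
          gcongr
          exact diff_subset
      _ = C * ((ENNReal.ofReal r ^ d₀)⁻¹ * (ENNReal.ofReal (r ^ (d:ℝ)) * v₁)) := by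
          rw [vol_ball hd _ hr.le, mul_assoc]
      _ = C * (ENNReal.ofReal (r ^ δ) * v₁) := by
          congr 1
          rw [ENNReal.ofReal_rpow_of_pos hr, ← ENNReal.ofReal_inv_of_pos (by positivity),
            ← mul_assoc, ← ENNReal.ofReal_mul (by positivity)]
          congr 2
          rw [hδdef, Real.rpow_sub hr]
          field_simp
  have hdisj : Disjoint (ball x₀ r ∩ ball (0:EuclideanSpace ℝ (Fin d)) r) (ball x₀ r \ ball (0:EuclideanSpace ℝ (Fin d)) r) :=
    Set.disjoint_left.2 fun y hy₁ hy₂ => hy₂.2 hy₁.2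
  have hI : ∫⁻ y in ball x₀ r, ENNReal.ofReal ‖b s y‖ ^ d₀ ≤
      C * (ENNReal.ofReal ((Kc d d₀ + 1) * r ^ δ) * v₁) := by
    calc ∫⁻ y in ball x₀ r, ENNReal.ofReal ‖b s y‖ ^ d₀
        = ∫⁻ y in (ball x₀ r ∩ ball (0:EuclideanSpace ℝ (Fin d)) r) ∪ (ball x₀ r \ ball (0:EuclideanSpace ℝ (Fin d)) r),
            ENNReal.ofReal ‖b s y‖ ^ d₀ := by rw [Set.inter_union_diff]
      _ = (∫⁻ y in ball x₀ r ∩ ball (0:EuclideanSpace ℝ (Fin d)) r, ENNReal.ofReal ‖b s y‖ ^ d₀) +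
            ∫⁻ y in ball x₀ r \ ball (0:EuclideanSpace ℝ (Fin d)) r, ENNReal.ofReal ‖b s y‖ ^ d₀ :=
          lintegral_union (measurableSet_ball.diff measurableSet_ball) hdisj
      _ ≤ C * (ENNReal.ofReal (Kc d d₀ * r ^ δ) * v₁) + C * (ENNReal.ofReal (r ^ δ) * v₁) :=
          add_le_add hterm1 hterm2
      _ = C * (ENNReal.ofReal ((Kc d d₀ + 1) * r ^ δ) * v₁) := by
          rw [← mul_add, ← add_mul, ← ENNReal.ofReal_add (by positivity) (by positivity)]
          congr 3
          ring
  have havg : (volume (ball x₀ r))⁻¹ * ∫⁻ y in ball x₀ r, ENNReal.ofReal ‖b s y‖ ^ d₀ ≤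
      C * ENNReal.ofReal ((Kc d d₀ + 1) * r ^ (-d₀)) := by
    rw [vol_ball hd x₀ hr.le]
    have hrd0 : ENNReal.ofReal (r ^ (d:ℝ)) ≠ 0 := by
      simp only [ne_eq, ENNReal.ofReal_eq_zero, not_le]
      positivity
    calc (ENNReal.ofReal (r ^ (d:ℝ)) * v₁)⁻¹ * ∫⁻ y in ball x₀ r, ENNReal.ofReal ‖b s y‖ ^ d₀
        ≤ (ENNReal.ofReal (r ^ (d:ℝ)) * v₁)⁻¹ *
            (C * (ENNReal.ofReal ((Kc d d₀ + 1) * r ^ δ) * v₁)) := by gcongr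
      _ = (v₁⁻¹ * v₁) * (C * ((ENNReal.ofReal (r ^ (d:ℝ)))⁻¹ *
            ENNReal.ofReal ((Kc d d₀ + 1) * r ^ δ))) := by
          rw [ENNReal.mul_inv (Or.inl hrd0) (Or.inl ENNReal.ofReal_ne_top)]
          ring
      _ = C * ((ENNReal.ofReal (r ^ (d:ℝ)))⁻¹ * ENNReal.ofReal ((Kc d d₀ + 1) * r ^ δ)) := by
          rw [ENNReal.inv_mul_cancel hv0 hvt, one_mul]
      _ = C * ENNReal.ofReal ((Kc d d₀ + 1) * r ^ (-d₀)) := by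
          congr 1
          rw [← ENNReal.ofReal_inv_of_pos (by positivity), ← ENNReal.ofReal_mul (by positivity)]
          congr 1
          have hr1 : r ^ (-d₀) = r ^ δ / r ^ ((d:ℝ)) := by
            rw [← Real.rpow_sub hr]
            congr 1
            rw [hδdef]; ring
          rw [hr1]
          field_simp
  refine (ENNReal.rpow_le_rpow (z := 1/d₀) havg (by positivity)).trans (le_of_eq ?_)
  rw [ENNReal.mul_rpow_of_nonneg _ _ (by positivity), hC, ← ENNReal.rpow_mul,
    mul_one_div_cancel h1.ne', ENNReal.rpow_one,
    ENNReal.ofReal_rpow_of_pos (by positivity)]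
  have hreal : ((Kc d d₀ + 1) * r ^ (-d₀)) ^ (1/d₀) = Nc d d₀ * r⁻¹ := by
    rw [Real.mul_rpow (by positivity) (by positivity)]
    rw [show (r ^ (-d₀)) ^ (1/d₀) = r ^ ((-d₀) * (1/d₀)) from (Real.rpow_mul hr.le _ _).symm,
      show -d₀ * (1/d₀) = -1 by field_simp, Real.rpow_neg_one]
    rfl
  rw [hreal, ← ENNReal.ofReal_inv_of_pos hr, ← ENNReal.ofReal_mul hc.le,
    ← ENNReal.ofReal_mul (mul_nonneg (Nc_pos h2).le hc.le)]
  congr 1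
  ring

end Stmt13Aux


open Stmt13Aux in
/-- if `b` is Borel with `|b(t,x)| ≤ c/|x|` and `d/2 < d₀ < d`, then
with `p₁ = d₀`, `q₁ = ∞` there is `N = N(d)` such that
`sup_{r ≤ ρ} r · sup_{C ∈ ℂ_r} ⨍‖b‖_{L_{d₀,∞}(C)} ≤ N c` uniformly in `ρ`; in
particular this can be made smaller than any `ε > 0` by taking `c` small. -/
theorem stmt13 (d : ℕ) (hd : 1 ≤ d) (d₀ : ℝ) (hd₀1 : (d : ℝ) / 2 < d₀) (hd₀2 : d₀ < d) :
    ∃ N : ℝ, 0 < N ∧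
      (∀ (b : ℝ → EuclideanSpace ℝ (Fin d) → EuclideanSpace ℝ (Fin d)) (c : ℝ),
        0 < c → Measurable (Function.uncurry b) →
        (∀ t x, x ≠ 0 → ‖b t x‖ ≤ c / ‖x‖) → (∀ t, b t 0 = 0) →
        ∀ r : ℝ, 0 < r → ∀ t₀ : ℝ, ∀ x₀ : EuclideanSpace ℝ (Fin d),
          ENNReal.ofReal r * avgMixedNormInf d d₀ r t₀ x₀ b ≤ ENNReal.ofReal (N * c)) ∧
      (∀ ε : ℝ, 0 < ε →
        ∀ (b : ℝ → EuclideanSpace ℝ (Fin d) → EuclideanSpace ℝ (Fin d)) (c : ℝ),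
          0 < c → c ≤ ε / N → Measurable (Function.uncurry b) →
          (∀ t x, x ≠ 0 → ‖b t x‖ ≤ c / ‖x‖) → (∀ t, b t 0 = 0) →
          ∀ r : ℝ, 0 < r → ∀ t₀ : ℝ, ∀ x₀ : EuclideanSpace ℝ (Fin d),
            ENNReal.ofReal r * avgMixedNormInf d d₀ r t₀ x₀ b ≤ ENNReal.ofReal ε) := by
  have hd1 : (1:ℝ) ≤ (d:ℝ) := by exact_mod_cast hd
  have h1 : 0 < d₀ := lt_of_lt_of_le (by linarith) hd₀1.le
  have hN : 0 < Nc d d₀ := Nc_pos hd₀2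
  have key : ∀ (b : ℝ → EuclideanSpace ℝ (Fin d) → EuclideanSpace ℝ (Fin d)) (c : ℝ),
      0 < c → (∀ t x, x ≠ 0 → ‖b t x‖ ≤ c / ‖x‖) →
      ∀ r : ℝ, 0 < r → ∀ t₀ : ℝ, ∀ x₀ : EuclideanSpace ℝ (Fin d),
        ENNReal.ofReal r * avgMixedNormInf d d₀ r t₀ x₀ b ≤
          ENNReal.ofReal (Nc d d₀ * c) := by
    intro b c hc hb r hr t₀ x₀
    have hsup : avgMixedNormInf d d₀ r t₀ x₀ b ≤
        ENNReal.ofReal (Nc d d₀ * c) * (ENNReal.ofReal r)⁻¹ := by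
      refine essSup_le_of_ae_le _ (Filter.Eventually.of_forall fun s => ?_)
      exact avg_bound hd h1 hd₀2 b c hc hb hr s x₀
    calc ENNReal.ofReal r * avgMixedNormInf d d₀ r t₀ x₀ b
        ≤ ENNReal.ofReal r * (ENNReal.ofReal (Nc d d₀ * c) * (ENNReal.ofReal r)⁻¹) := by gcongr
      _ = ENNReal.ofReal (Nc d d₀ * c) * (ENNReal.ofReal r * (ENNReal.ofReal r)⁻¹) := by ring
      _ = ENNReal.ofReal (Nc d d₀ * c) := by
          rw [ENNReal.mul_inv_cancel (ENNReal.ofReal_pos.2 hr).ne' ENNReal.ofReal_ne_top, mul_one]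
  refine ⟨Nc d d₀, hN, ?_, ?_⟩
  · intro b c hc _hm hb _hb0 r hr t₀ x₀
    exact key b c hc hb r hr t₀ x₀
  · intro ε hε b c hc hcε _hm hb _hb0 r hr t₀ x₀
    refine (key b c hc hb r hr t₀ x₀).trans (ENNReal.ofReal_le_ofReal ?_)
    have : Nc d d₀ * c ≤ Nc d d₀ * (ε / Nc d d₀) := by nlinarith
    calc Nc d d₀ * c ≤ Nc d d₀ * (ε / Nc d d₀) := this
      _ = ε := by field_simp

end
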